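/- Let w be the treewidth of a base network G and let w^t be the treewidth of any generalized N-world network constructed from G with respect to any subset X of its nodes and any choice of added edges between duplicates. Then w^t ≤ N(w + 1) − 1. -/

import Mathlib

namespace Counterfactual

attribute [local instance] Classical.propDecidable

noncomputable section

universe u v

variable {V : Type u}

variable {V : Type u}

/-- The directed graph given by edge relation `E` (`E p c` means `p` is a parent of `c`)
is acyclic, i.e. it is a DAG. -/
def IsAcyclicRel (E : V → V → Prop) : Prop := ∀ x, ¬ Relation.TransGen E x x

/-- `x` is a root of the DAG `E`: it has no parents.  Non-roots are called internal. -/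
def isRoot (E : V → V → Prop) (x : V) : Prop := ∀ p, ¬ E p x

/-- The family of variable `X` in the DAG `E`: `X` together with its parents. -/
def famOf (E : V → V → Prop) (X : V) : Set V := insert X {p | E p X}

/-- The moral graph of the DAG `E`: connect every pair of nodes having a common child,
then drop directions. -/
def moralGraph (E : V → V → Prop) : SimpleGraph V where
  Adj u w := u ≠ w ∧ (E u w ∨ E w u ∨ ∃ c, E u c ∧ E w c)
  symm := by
    constructor
    intro u w h
    obtain ⟨h1, h2⟩ := h
    refine ⟨Ne.symm h1, ?_⟩
    rcases h2 with h | h | ⟨c, hc1, hc2⟩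
    · exact Or.inr (Or.inl h)
    · exact Or.inl h
    · exact Or.inr (Or.inr ⟨c, hc2, hc1⟩)
  loopless := by
    constructor
    intro u h
    exact h.1 rfl

/-- Eliminating vertex `x` from an undirected graph: pairwise connect the neighbors
of `x`, then remove (isolate) `x`. -/
def eliminate (G : SimpleGraph V) (x : V) : SimpleGraph V where
  Adj u w := u ≠ w ∧ u ≠ x ∧ w ≠ x ∧ (G.Adj u w ∨ (G.Adj u x ∧ G.Adj x w))
  symm := by
    constructor
    intro u w h
    obtain ⟨h1, h2, h3, h4⟩ := h
    refine ⟨Ne.symm h1, h3, h2, ?_⟩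
    rcases h4 with h | ⟨ha, hb⟩
    · exact Or.inl h.symm
    · exact Or.inr ⟨hb.symm, ha.symm⟩
  loopless := by
    constructor
    intro u h
    exact h.1 rfl

/-- Eliminate a list of vertices, in order. -/
def elimList (G : SimpleGraph V) : List V → SimpleGraph V
  | [] => G
  | x :: xs => elimList (eliminate G x) xs

/-- The graph obtained from `G` after eliminating the first `i` variables of `π`. -/
def graphAt (G : SimpleGraph V) (π : List V) (i : ℕ) : SimpleGraph V :=
  elimList G (π.take i)

/-- `x` together with its neighbors in the undirected graph `G`. -/
def closedNbhd (G : SimpleGraph V) (x : V) : Set V := insert x {y | G.Adj x y}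

/-- An elimination order: a total ordering of all the variables. -/
def IsElimOrder (π : List V) : Prop := π.Nodup ∧ ∀ x : V, x ∈ π

/-- The cluster of variable `X` in the elimination process on the moral graph of `E`
induced by `π`: `X` together with its neighbors in the graph just before `X` is eliminated. -/
def clusterOf (E : V → V → Prop) (π : List V) (X : V) : Set V :=
  closedNbhd (graphAt (moralGraph E) π (π.idxOf X)) X

/-- The width of an elimination order: the size of its largest cluster minus one. -/
def orderWidth (E : V → V → Prop) (π : List V) : ℕ :=
  sSup {n : ℕ | ∃ X ∈ π, n = (clusterOf E π X).ncard} - 1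

/-- The treewidth of the DAG `E`: the minimum width attained by an elimination order. -/
def treewidthOf (E : V → V → Prop) : ℕ :=
  sInf {w : ℕ | ∃ π : List V, IsElimOrder π ∧ orderWidth E π = w}

/-! ### Twin networks -/

/-- The variables of the twin network of `E`: the base variables (`Sum.inl`) together
with a duplicate (`Sum.inr`) for every internal (non-root) variable. -/
abbrev TwinVar (E : V → V → Prop) : Type u := V ⊕ {x : V // ¬ isRoot E x}

/-- The duplicate `X'` of a variable `X`; by convention `X' = X` when `X` is a root. -/
def twinDup (E : V → V → Prop) (x : V) : TwinVar E :=
  if h : isRoot E x then Sum.inl x else Sum.inr ⟨x, h⟩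

/-- The edges of the twin network `G^t` of the base network `E`. -/
def twinEdge (E : V → V → Prop) (a b : TwinVar E) : Prop :=
  match a, b with
  | Sum.inl p, Sum.inl x => E p x
  | Sum.inl p, Sum.inr x => isRoot E p ∧ E p x.1
  | Sum.inr p, Sum.inr x => E p.1 x.1
  | Sum.inr _, Sum.inl _ => False

/-- The twin elimination order: replace each non-root variable `X` of `π`
by the two consecutive variables `X, X'`. -/
def twinOrder (E : V → V → Prop) (π : List V) : List (TwinVar E) :=
  π.foldr (fun x acc =>
    (if h : isRoot E x then [Sum.inl x] else [Sum.inl x, Sum.inr ⟨x, h⟩]) ++ acc) []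

/-- Eliminate the pair `{X, X'}` (a single variable when `X` is a root) from a graph
on the twin variables. -/
def elimTwinPair (E : V → V → Prop) (G : SimpleGraph (TwinVar E)) (x : V) :
    SimpleGraph (TwinVar E) :=
  if h : isRoot E x then eliminate G (Sum.inl x)
  else eliminate (eliminate G (Sum.inl x)) (Sum.inr ⟨x, h⟩)

/-- The twin graph sequence: `twinGraphAt E π i` is the graph obtained from the moral graph
of the twin network after eliminating the pairs `{π 0, (π 0)'}, …` for the first `i`
variables of `π`. -/
def twinGraphAt (E : V → V → Prop) (π : List V) (i : ℕ) : SimpleGraph (TwinVar E) :=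
  (π.take i).foldl (elimTwinPair E) (moralGraph (twinEdge E))

/-- The cluster of twin variable `Y` in the elimination process on the moral graph of the
twin network induced by the twin elimination order. -/
def twinClusterOf (E : V → V → Prop) (π : List V) (Y : TwinVar E) : Set (TwinVar E) :=
  clusterOf (twinEdge E) (twinOrder E π) Y

/-! ### Jointrees -/

/-- A leaf of a tree: a node with exactly one neighbor. -/
def IsLeaf {J : Type v} (T : SimpleGraph J) (j : J) : Prop := ∃! k, T.Adj j k

/-- A jointree for the DAG `E`: a tree `T` together with a host function `H` mapping
(the index `X` of) each family of `E` to a nonempty set of hosting nodes; only leaves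
may be hosts and each leaf hosts exactly one family. -/
structure Jointree (E : V → V → Prop) (J : Type v) where
  T : SimpleGraph J
  isTree : T.IsTree
  H : V → Set J
  hosts_nonempty : ∀ X : V, (H X).Nonempty
  hosts_leaf : ∀ (X : V) (j : J), j ∈ H X → IsLeaf T j
  leaf_host : ∀ j : J, IsLeaf T j → ∃! X : V, j ∈ H X

variable {E : V → V → Prop} {J : Type v}

/-- The variables appearing (in a family hosted by a leaf) on the `i`-side of the
tree edge `(i, j)`. -/
def sideVars (jt : Jointree E J) (i j : J) : Set V :=
  {X | ∃ (Y : V) (l : J), l ∈ jt.H Y ∧ X ∈ famOf E Y ∧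
    (jt.T.deleteEdges {s(i, j)}).Reachable i l}

/-- The separator of the tree edge `(i, j)`: the variables hosted on both sides. -/
def sepOf (jt : Jointree E J) (i j : J) : Set V :=
  sideVars jt i j ∩ sideVars jt j i

/-- The cluster of a jointree node: for a leaf, the family it hosts; for an internal
node, the union of the separators of its adjacent edges. -/
def clusterJT (jt : Jointree E J) (i : J) : Set V :=
  if IsLeaf jt.T i then ⋃ X ∈ {Y : V | i ∈ jt.H Y}, famOf E X
  else ⋃ j ∈ {j : J | jt.T.Adj i j}, sepOf jt i j

/-- The width of a jointree: the size of its largest cluster minus one. -/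
def widthJT (jt : Jointree E J) : ℕ := (⨆ i : J, (clusterJT jt i).ncard) - 1

/-- `l` is at or below `u` in the tree `T` rooted at `r`: `u` lies on every
(equivalently, on the unique) path from `r` to `l`. -/
def Below {J : Type v} (T : SimpleGraph J) (r u l : J) : Prop :=
  ∀ p : T.Walk r l, p.IsPath → u ∈ p.support

/-- Node `u` of the jointree is duplicated by Algorithm 1 (with root `r`): every leaf at
or below `u` hosts only families of internal variables. -/
def Duplicated (jt : Jointree E J) (r u : J) : Prop :=
  ∀ l : J, IsLeaf jt.T l → Below jt.T r u l → ∀ X : V, l ∈ jt.H X → ¬ isRoot E X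

/-- The nodes of the twin jointree produced by Algorithm 1: the original nodes
(`Sum.inl`) plus a duplicate (`Sum.inr`) of every duplicated node. -/
abbrev TwinJ (jt : Jointree E J) (r : J) := J ⊕ {u : J // Duplicated jt r u}

/-- Adjacency of the twin jointree produced by Algorithm 1: the original tree edges,
the duplicates of the duplicated edges, and the edges attaching the roots of the
duplicate subtrees to the parents of the corresponding duplicated subtree roots. -/
def twinTAdj (jt : Jointree E J) (r : J) : TwinJ jt r → TwinJ jt r → Prop
  | Sum.inl i, Sum.inl j => jt.T.Adj i j
  | Sum.inl i, Sum.inr v => jt.T.Adj i v.1 ∧ ¬ Duplicated jt r i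
  | Sum.inr u, Sum.inl j => jt.T.Adj u.1 j ∧ ¬ Duplicated jt r j
  | Sum.inr u, Sum.inr v => jt.T.Adj u.1 v.1

/-- The tree of the twin jointree produced by Algorithm 1. -/
def twinT (jt : Jointree E J) (r : J) : SimpleGraph (TwinJ jt r) where
  Adj := twinTAdj jt r
  symm := by
    constructor
    rintro (i | u) (j | v) h <;> simp only [twinTAdj] at h ⊢
    · exact jt.T.adj_symm h
    · exact ⟨jt.T.adj_symm h.1, h.2⟩
    · exact ⟨jt.T.adj_symm h.1, h.2⟩
    · exact jt.T.adj_symm h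
  loopless := by
    constructor
    rintro (i | u) h <;> simp only [twinTAdj] at h
    · exact jt.T.irrefl h
    · exact jt.T.irrefl h

/-- The host function of the twin jointree produced by Algorithm 1: a base family is
hosted by the original hosts of the corresponding base family, and a duplicate family is
hosted by the duplicates of the hosts of the corresponding base family. -/
def twinH (jt : Jointree E J) (r : J) : TwinVar E → Set (TwinJ jt r) :=
  fun a =>
    match a with
    | Sum.inl X => Sum.inl '' jt.H X
    | Sum.inr x => {b | ∃ (l : J) (hl : Duplicated jt r l),
        l ∈ jt.H x.1 ∧ b = Sum.inr ⟨l, hl⟩}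

/-- The copy of jointree node `i` on the duplicate side: its duplicate if `i` is
duplicated, and `i` itself otherwise. -/
def dupJ (jt : Jointree E J) (r i : J) : TwinJ jt r :=
  if h : Duplicated jt r i then Sum.inr ⟨i, h⟩ else Sum.inl i

/-! ### Thinning -/

/-- Thinning rule 1 for removing the functional variable `X` from the separator of
edge `(i,j)`: the edge lies on a path between two leaves hosting the family of `X`,
and every separator on this path contains `X`. -/
def Rule1 (jt : Jointree E J) (S : J → J → Set V) (i j : J) (X : V) : Prop :=
  ∃ (l m : J) (p : jt.T.Walk l m), p.IsPath ∧ l ∈ jt.H X ∧ m ∈ jt.H X ∧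
    s(i, j) ∈ p.edges ∧ ∀ a b : J, s(a, b) ∈ p.edges → X ∈ S a b

/-- Thinning rule 2 for removing the variable `X` from the separator of edge `(i,j)`:
no other separator adjacent to `i` contains `X`, or no other separator adjacent to `j`
contains `X`. -/
def Rule2 (jt : Jointree E J) (S : J → J → Set V) (i j : J) (X : V) : Prop :=
  (∀ k : J, jt.T.Adj i k → k ≠ j → X ∉ S i k) ∨
  (∀ k : J, jt.T.Adj j k → k ≠ i → X ∉ S j k)

/-- One valid thinning step on a separator assignment: remove a functional
(here: internal, as in an SCM) variable `X` from the separator of an edge `(i,j)`,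
as licensed by one of the two thinning rules. -/
def ThinStep (jt : Jointree E J) (S S' : J → J → Set V) : Prop :=
  ∃ (i j : J) (X : V), jt.T.Adj i j ∧ ¬ isRoot E X ∧ X ∈ S i j ∧
    (Rule1 jt S i j X ∨ Rule2 jt S i j X) ∧
    S' = fun a b => if (a = i ∧ b = j) ∨ (a = j ∧ b = i) then S a b \ {X} else S a b

/-- `S` is the separator assignment of a thinned jointree obtained from `jt`:
it is reachable from the separators of `jt` by valid thinning steps, applied
to exhaustion. -/
def IsThinning (jt : Jointree E J) (S : J → J → Set V) : Prop :=
  Relation.ReflTransGen (ThinStep jt) (fun i j => sepOf jt i j) S ∧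
    ∀ S', ¬ ThinStep jt S S'

/-- The cluster of a node of a thinned jointree with separator assignment `S`. -/
def thClusterJT (jt : Jointree E J) (S : J → J → Set V) (i : J) : Set V :=
  if IsLeaf jt.T i then ⋃ X ∈ {Y : V | i ∈ jt.H Y}, famOf E X
  else ⋃ j ∈ {j : J | jt.T.Adj i j}, S i j

/-- The width of a thinned jointree with separator assignment `S`. -/
def thWidthJT (jt : Jointree E J) (S : J → J → Set V) : ℕ :=
  (⨆ i : J, (thClusterJT jt S i).ncard) - 1

/-- The causal treewidth of the DAG `E` whose internal variables are all functional:
the minimum width attained by a thinned jointree for `E`. -/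
def causalTreewidth (E : V → V → Prop) : ℕ :=
  sInf {w : ℕ | ∃ (J : Type u) (_ : Finite J) (jt : Jointree E J) (S : J → J → Set V),
    IsThinning jt S ∧ thWidthJT jt S = w}

/-- The thinned separator assignment for the twin jointree produced by Algorithm 1,
obtained from a thinned separator assignment `S` of the base jointree:
`S^t = S` on duplicated edges, `S^t = S'` on duplicate edges, and
`S^t = S ∪ S'` on invariant edges. -/
def twinSep (jt : Jointree E J) (r : J) (S : J → J → Set V) :
    TwinJ jt r → TwinJ jt r → Set (TwinVar E)
  | Sum.inl i, Sum.inl j =>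
      if Duplicated jt r i ∨ Duplicated jt r j then Sum.inl '' S i j
      else Sum.inl '' S i j ∪ twinDup E '' S i j
  | Sum.inl i, Sum.inr v => twinDup E '' S i v.1
  | Sum.inr u, Sum.inl j => twinDup E '' S u.1 j
  | Sum.inr u, Sum.inr v => twinDup E '' S u.1 v.1

/-! ### N-world networks -/

/-- The variables of the `N`-world network of a base network with variables `V`,
with respect to a set `R` of roots: the variables in `R` (`Sum.inl`) stay unreplicated,
and each variable outside `R` is replaced by `N` duplicates (`Sum.inr`). -/
abbrev NVar (R : Set V) (N : ℕ) : Type u := {x : V // x ∈ R} ⊕ ({x : V // x ∉ R} × Fin N)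

/-- The `k`-th duplicate `X^k` of variable `X`; by convention `X^k = X` when `X ∈ R`. -/
def ndup (R : Set V) (N : ℕ) (x : V) (k : Fin N) : NVar R N :=
  if h : x ∈ R then Sum.inl ⟨x, h⟩ else Sum.inr (⟨x, h⟩, k)

/-- The edges of the `N`-world network `G^N` of the base network `E` with respect to the
set of roots `R`: a parent `P ∈ R` of `X` is a parent of every duplicate `X^k`, while a
parent `P ∉ R` of `X` yields the edges `P^k → X^k`. -/
def nEdge (E : V → V → Prop) (R : Set V) (N : ℕ) (a b : NVar R N) : Prop :=
  match a, b with
  | Sum.inl p, Sum.inr x => E p.1 x.1.1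
  | Sum.inr p, Sum.inr x => E p.1.1 x.1.1 ∧ p.2 = x.2
  | _, _ => False

/-- Eliminate all `N` duplicates `x^1, …, x^N` of `x` (a single variable when `x ∈ R`). -/
def elimNBlock (R : Set V) (N : ℕ) (G : SimpleGraph (NVar R N)) (x : V) :
    SimpleGraph (NVar R N) :=
  if h : x ∈ R then eliminate G (Sum.inl ⟨x, h⟩)
  else (List.ofFn (fun k : Fin N => (Sum.inr (⟨x, h⟩, k) : NVar R N))).foldl eliminate G

/-- The `N`-world elimination order obtained from `π`: replace each variable `x ∉ R`
by its `N` duplicates `x^1, …, x^N`. -/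
def nOrder (R : Set V) (N : ℕ) (π : List V) : List (NVar R N) :=
  π.foldr (fun x acc =>
    (if h : x ∈ R then [(Sum.inl ⟨x, h⟩ : NVar R N)]
     else List.ofFn (fun k : Fin N => (Sum.inr (⟨x, h⟩, k) : NVar R N))) ++ acc) []

/-! ### Generalized N-world networks -/

/-- The variables of a generalized `N`-world network: nodes outside the duplicated set `D`
stay unreplicated, and each node in `D` is replaced by `N` duplicates. -/
abbrev GNVar (D : Set V) (N : ℕ) : Type u := {x : V // x ∉ D} ⊕ ({x : V // x ∈ D} × Fin N)

/-- The edges of a generalized `N`-world network of the base network `E` with respect to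
the duplicated set `D` and the optional extra edges `ex` between duplicates (an edge from
`X^i` to `X^j` is added when `i < j` and `ex X i j` holds). -/
def gnEdge (E : V → V → Prop) (D : Set V) (N : ℕ) (ex : V → Fin N → Fin N → Prop)
    (a b : GNVar D N) : Prop :=
  match a, b with
  | Sum.inl p, Sum.inl x => E p.1 x.1
  | Sum.inl p, Sum.inr x => E p.1 x.1.1
  | Sum.inr p, Sum.inr x =>
      (E p.1.1 x.1.1 ∧ p.2 = x.2) ∨ (p.1.1 = x.1.1 ∧ p.2 < x.2 ∧ ex x.1.1 p.2 x.2)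
  | Sum.inr _, Sum.inl _ => False


/-- The `N`-world graph sequence: the graph obtained from the moral graph of the
`N`-world network after eliminating all duplicates of the first `i` variables of `π`. -/
def nGraphAt (E : V → V → Prop) (R : Set V) (N : ℕ) (π : List V) (i : ℕ) :
    SimpleGraph (NVar R N) :=
  (π.take i).foldl (elimNBlock R N) (moralGraph (nEdge E R N))

/-- The cluster of an `N`-world variable `Y` in the elimination process on the moral
graph of the `N`-world network induced by the `N`-world elimination order. -/
def nClusterOf (E : V → V → Prop) (R : Set V) (N : ℕ) (π : List V) (Y : NVar R N) :
    Set (NVar R N) :=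
  clusterOf (nEdge E R N) (nOrder R N π) Y

end

/-! ### Auxiliary machinery for Statement 14 -/

section GNAux

section IdxAux

instance {α : Type*} {β : Type*} [BEq α] [BEq β] [LawfulBEq α] [LawfulBEq β] :
    LawfulBEq (α ⊕ β) where
  eq_of_beq {a b} h := by
    cases a <;> cases b
    · exact congrArg Sum.inl (eq_of_beq h)
    · exact (Bool.false_ne_true h).elim
    · exact (Bool.false_ne_true h).elim
    · exact congrArg Sum.inr (eq_of_beq h)
  rfl {a} := by
    cases a with
    | inl x => exact (BEq.rfl : (x == x) = true)
    | inr x => exact (BEq.rfl : (x == x) = true)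

variable {α : Type*} [BEq α] [LawfulBEq α]

lemma myIndexOf_cons_self (a : α) (l : List α) : (a :: l).idxOf a = 0 := by
  simp [List.idxOf_cons]

lemma myIndexOf_cons_ne {a b : α} (l : List α) (h : b ≠ a) :
    (b :: l).idxOf a = l.idxOf a + 1 := by
  rw [List.idxOf_cons, beq_false_of_ne h, Bool.cond_false]

lemma myIndexOf_append_left {a : α} :
    ∀ {l₁ : List α} (l₂ : List α), a ∈ l₁ → (l₁ ++ l₂).idxOf a = l₁.idxOf a := by
  intro l₁
  induction l₁ with
  | nil => intro l₂ h; exact absurd h (List.not_mem_nil)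
  | cons b t ih =>
    intro l₂ h
    by_cases hb : b = a
    · subst hb
      rw [List.cons_append, myIndexOf_cons_self, myIndexOf_cons_self]
    · rw [List.cons_append, myIndexOf_cons_ne _ hb, myIndexOf_cons_ne _ hb,
        ih l₂ (List.mem_of_ne_of_mem (fun hh => hb hh.symm) h)]

lemma myIndexOf_append_right {a : α} :
    ∀ {l₁ : List α} (l₂ : List α), a ∉ l₁ →
      (l₁ ++ l₂).idxOf a = l₁.length + l₂.idxOf a := by
  intro l₁
  induction l₁ with
  | nil => intro l₂ _; simp
  | cons b t ih =>
    intro l₂ h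
    have hb : b ≠ a := fun hh => h (hh ▸ List.mem_cons_self)
    rw [List.cons_append, myIndexOf_cons_ne _ hb, ih l₂ (fun hh => h (List.mem_cons_of_mem b hh)),
      List.length_cons]
    omega

lemma myIndexOf_lt_length {a : α} :
    ∀ {l : List α}, a ∈ l → l.idxOf a < l.length := by
  intro l
  induction l with
  | nil => intro h; exact absurd h (List.not_mem_nil)
  | cons b t ih =>
    intro h
    by_cases hb : b = a
    · subst hb
      rw [myIndexOf_cons_self]
      simp
    · rw [myIndexOf_cons_ne _ hb, List.length_cons]
      exact Nat.succ_lt_succ (ih (List.mem_of_ne_of_mem (fun hh => hb hh.symm) h))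

end IdxAux



variable {V : Type u}

/-- Projection of a generalized `N`-world variable to its base variable. -/
def gproj {D : Set V} {N : ℕ} : GNVar D N → V
  | Sum.inl x => x.1
  | Sum.inr x => x.1.1

/-- The block of duplicates of a base variable. -/
noncomputable def gblock (D : Set V) (N : ℕ) (x : V) : List (GNVar D N) :=
  if h : x ∈ D then List.ofFn (fun k : Fin N => Sum.inr (⟨x, h⟩, k)) else [Sum.inl ⟨x, h⟩]

/-- The generalized `N`-world elimination order from a base order. -/
noncomputable def gnOrder (D : Set V) (N : ℕ) (π : List V) : List (GNVar D N) :=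
  π.flatMap (gblock D N)

lemma gproj_mem_gblock {D : Set V} {N : ℕ} (a : GNVar D N) : a ∈ gblock D N (gproj a) := by
  cases a with
  | inl x =>
    show Sum.inl x ∈ gblock D N x.1
    simp only [gblock, dif_neg x.2, List.mem_singleton]
  | inr x =>
    obtain ⟨⟨v, hv⟩, k⟩ := x
    show Sum.inr (⟨v, hv⟩, k) ∈ gblock D N v
    simp only [gblock, dif_pos hv, List.mem_ofFn]
    exact ⟨k, rfl⟩

lemma mem_gblock_proj {D : Set V} {N : ℕ} {a : GNVar D N} {x : V}
    (h : a ∈ gblock D N x) : gproj a = x := by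
  unfold gblock at h
  split at h
  · rw [List.mem_ofFn] at h
    obtain ⟨k, rfl⟩ := h
    rfl
  · rw [List.mem_singleton] at h
    subst h; rfl

lemma gblock_nodup {D : Set V} {N : ℕ} (x : V) : (gblock D N x).Nodup := by
  unfold gblock
  split
  · exact List.nodup_ofFn.2 (fun i j hij => by simpa using hij)
  · exact List.nodup_singleton _

lemma gnOrder_nodup {D : Set V} {N : ℕ} {π : List V} (h : π.Nodup) :
    (gnOrder D N π).Nodup := by
  refine List.nodup_flatMap.2 ⟨fun x _ => gblock_nodup x, ?_⟩
  refine h.imp (fun {x y} hxy => ?_)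
  refine List.disjoint_left.2 (fun a hax hay => ?_)
  exact hxy ((mem_gblock_proj hax).symm.trans (mem_gblock_proj hay))

lemma mem_gnOrder {D : Set V} {N : ℕ} {π : List V} (hπ : ∀ x : V, x ∈ π)
    (a : GNVar D N) : a ∈ gnOrder D N π :=
  List.mem_flatMap.2 ⟨gproj a, hπ _, gproj_mem_gblock a⟩

lemma elimList_append {W : Type*} (G : SimpleGraph W) (l₁ l₂ : List W) :
    elimList G (l₁ ++ l₂) = elimList (elimList G l₁) l₂ := by
  induction l₁ generalizing G with
  | nil => rfl
  | cons a t ih =>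
    show elimList (eliminate G a) (t ++ l₂) = elimList (elimList (eliminate G a) t) l₂
    exact ih _

lemma eliminate_isolated {W : Type*} {G : SimpleGraph W} {c : W}
    (hc : ∀ b, ¬ G.Adj c b) (d : W) : ∀ b, ¬ (eliminate G d).Adj c b := by
  rintro b ⟨_, _, _, h | ⟨h, _⟩⟩
  · exact hc b h
  · exact hc d h

lemma eliminate_self_isolated {W : Type*} (G : SimpleGraph W) (c : W) :
    ∀ b, ¬ (eliminate G c).Adj c b := by
  rintro b ⟨_, h, _, _⟩
  exact h rfl

lemma elimList_isolated {W : Type*} {c : W} :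
    ∀ (L : List W) (G : SimpleGraph W), (∀ b, ¬ G.Adj c b) →
      ∀ b, ¬ (elimList G L).Adj c b := by
  intro L
  induction L with
  | nil => intro G h; exact h
  | cons a t ih => intro G h; exact ih (eliminate G a) (eliminate_isolated h a)

lemma elimList_mem_isolated {W : Type*} {c : W} :
    ∀ (L : List W) (G : SimpleGraph W), c ∈ L → ∀ b, ¬ (elimList G L).Adj c b := by
  intro L
  induction L with
  | nil => intro G h; exact absurd h (List.not_mem_nil)
  | cons a t ih =>
    intro G h
    rcases List.mem_cons.1 h with rfl | h
    · exact elimList_isolated t (eliminate G c) (eliminate_self_isolated G c)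
    · exact ih (eliminate G a) h

/-- The main elimination invariant: every edge projects to a base edge or collapses. -/
def InvP {D : Set V} {N : ℕ} (H : SimpleGraph (GNVar D N)) (G : SimpleGraph V) : Prop :=
  ∀ a b, H.Adj a b → gproj a = gproj b ∨ G.Adj (gproj a) (gproj b)

/-- The intermediate invariant while the block of `x` is being eliminated. -/
def InvF {D : Set V} {N : ℕ} (H : SimpleGraph (GNVar D N)) (G : SimpleGraph V)
    (x : V) : Prop :=
  ∀ a b, H.Adj a b → gproj a = gproj b ∨ G.Adj (gproj a) (gproj b) ∨
    (G.Adj (gproj a) x ∧ G.Adj x (gproj b))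

lemma InvP.toInvF {D : Set V} {N : ℕ} {H : SimpleGraph (GNVar D N)} {G : SimpleGraph V}
    {x : V} (h : InvP H G) : InvF H G x :=
  fun a b hab => (h a b hab).imp id Or.inl

lemma InvF.elim_copy {D : Set V} {N : ℕ} {H : SimpleGraph (GNVar D N)} {G : SimpleGraph V}
    {x : V} {c : GNVar D N} (h : InvF H G x) (hc : gproj c = x) :
    InvF (eliminate H c) G x := by
  rintro a b ⟨hab, hac, hbc, hH | ⟨h1, h2⟩⟩
  · exact h a b hH
  · have Ha : gproj a = x ∨ G.Adj (gproj a) x := by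
      rcases h a c h1 with h' | h' | ⟨h', _⟩
      · exact Or.inl (h'.trans hc)
      · exact Or.inr (hc ▸ h')
      · exact Or.inr h'
    have Hb : gproj b = x ∨ G.Adj x (gproj b) := by
      rcases h c b h2 with h' | h' | ⟨_, h'⟩
      · exact Or.inl (hc ▸ h'.symm)
      · exact Or.inr (hc ▸ h')
      · exact Or.inr h'
    rcases Ha with ha | ha <;> rcases Hb with hb | hb
    · exact Or.inl (ha.trans hb.symm)
    · exact Or.inr (Or.inl (by rw [ha]; exact hb))
    · exact Or.inr (Or.inl (by rw [hb]; exact ha))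
    · exact Or.inr (Or.inr ⟨ha, hb⟩)

lemma InvF.elimList_copies {D : Set V} {N : ℕ} {G : SimpleGraph V} {x : V} :
    ∀ (L : List (GNVar D N)) (H : SimpleGraph (GNVar D N)),
      (∀ c ∈ L, gproj c = x) → InvF H G x → InvF (elimList H L) G x := by
  intro L
  induction L with
  | nil => intro H _ h; exact h
  | cons a t ih =>
    intro H hL h
    exact ih (eliminate H a) (fun c hc => hL c (List.mem_cons_of_mem a hc))
      (h.elim_copy (hL a (List.mem_cons_self)))

lemma block_inv {D : Set V} {N : ℕ} {H : SimpleGraph (GNVar D N)} {G : SimpleGraph V}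
    {x : V} (h : InvP H G) : InvP (elimList H (gblock D N x)) (eliminate G x) := by
  intro a b hab
  have hax : gproj a ≠ x := by
    intro hx
    exact elimList_mem_isolated _ H (hx ▸ gproj_mem_gblock a) b hab
  have hbx : gproj b ≠ x := by
    intro hx
    exact elimList_mem_isolated _ H (hx ▸ gproj_mem_gblock b) a hab.symm
  rcases InvF.elimList_copies (gblock D N x) H (fun c hc => mem_gblock_proj hc)
      (h.toInvF) a b hab with h' | h' | ⟨h1, h2⟩
  · exact Or.inl h'
  · exact Or.inr ⟨h'.ne, hax, hbx, Or.inl h'⟩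
  · by_cases hpp : gproj a = gproj b
    · exact Or.inl hpp
    · exact Or.inr ⟨hpp, hax, hbx, Or.inr ⟨h1, h2⟩⟩

lemma cluster_block {D : Set V} {N : ℕ} {H : SimpleGraph (GNVar D N)} {G : SimpleGraph V}
    {x : V} {Y : GNVar D N} (h : InvP H G) (hY : gproj Y = x) (L : List (GNVar D N))
    (hL : ∀ c ∈ L, gproj c = x) :
    gproj '' closedNbhd (elimList H L) Y ⊆ closedNbhd G x := by
  rintro _ ⟨a, ha, rfl⟩
  rcases (Set.mem_insert_iff.1 ha) with rfl | hadj
  · exact hY ▸ Set.mem_insert _ _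
  · rcases InvF.elimList_copies L H hL h.toInvF Y a hadj with h' | h' | ⟨h1, _⟩
    · rw [← h', hY]; exact Set.mem_insert _ _
    · rw [hY] at h'
      exact Set.mem_insert_of_mem _ h'
    · rw [hY] at h1
      exact (G.irrefl h1).elim

lemma gnEdge_proj {E : V → V → Prop} {D : Set V} {N : ℕ} {ex : V → Fin N → Fin N → Prop}
    {a b : GNVar D N} (h : gnEdge E D N ex a b) :
    E (gproj a) (gproj b) ∨ gproj a = gproj b := by
  cases a with
  | inl p =>
    cases b with
    | inl x => exact Or.inl h
    | inr x => exact Or.inl h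
  | inr p =>
    cases b with
    | inl x => exact absurd h not_false
    | inr x =>
      rcases h with ⟨h, _⟩ | ⟨h, _⟩
      · exact Or.inl h
      · exact Or.inr h

lemma base_InvP {E : V → V → Prop} {D : Set V} {N : ℕ} {ex : V → Fin N → Fin N → Prop} :
    InvP (moralGraph (gnEdge E D N ex)) (moralGraph E) := by
  rintro a b ⟨hab, h⟩
  by_cases hp : gproj a = gproj b
  · exact Or.inl hp
  · refine Or.inr ⟨hp, ?_⟩
    rcases h with h | h | ⟨c, h1, h2⟩
    · rcases gnEdge_proj h with h' | h'
      · exact Or.inl h'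
      · exact absurd h' hp
    · rcases gnEdge_proj h with h' | h'
      · exact Or.inr (Or.inl h')
      · exact absurd h'.symm hp
    · rcases gnEdge_proj h1 with h1' | h1' <;> rcases gnEdge_proj h2 with h2' | h2'
      · exact Or.inr (Or.inr ⟨gproj c, h1', h2'⟩)
      · exact Or.inl (by rw [← h2'] at h1'; exact h1')
      · exact Or.inr (Or.inl (by rw [← h1'] at h2'; exact h2'))
      · exact absurd (h1'.trans h2'.symm) hp

/-- The classical `BEq` instance used by `clusterOf`. -/
noncomputable abbrev cBEq (α : Type*) : BEq α :=
  @instBEqOfDecidableEq α fun a b => Classical.propDecidable (a = b)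

attribute [local instance 2000] cBEq

lemma main_cluster {D : Set V} {N : ℕ} :
    ∀ (π : List V) (H : SimpleGraph (GNVar D N)) (G : SimpleGraph V), π.Nodup → InvP H G →
      ∀ Y ∈ gnOrder D N π,
        gproj '' closedNbhd
          (elimList H ((gnOrder D N π).take
            (@List.idxOf _ (cBEq _) Y (gnOrder D N π)))) Y
          ⊆ closedNbhd
            (elimList G (π.take (@List.idxOf V (cBEq V) (gproj Y) π))) (gproj Y) := by
  intro π
  induction π with
  | nil => intro H G _ _ Y hY; exact absurd hY (by simp [gnOrder])
  | cons x rest ih =>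
    intro H G hnd hinv Y hY
    have hord : gnOrder D N (x :: rest) = gblock D N x ++ gnOrder D N rest := by
      simp [gnOrder]
    rw [hord] at hY ⊢
    rcases List.mem_append.1 hY with hmem | hmem
    · have hpY : gproj Y = x := mem_gblock_proj hmem
      rw [myIndexOf_append_left _ hmem,
        List.take_append_of_le_length (le_of_lt (myIndexOf_lt_length hmem)), hpY,
        myIndexOf_cons_self, List.take_zero]
      exact cluster_block hinv hpY _ (fun c hc => mem_gblock_proj (List.take_subset _ _ hc))
    · obtain ⟨y, hy, hYy⟩ := List.mem_flatMap.1 hmem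
      have hpY : gproj Y = y := mem_gblock_proj hYy
      have hxr : x ∉ rest := (List.nodup_cons.1 hnd).1
      have hpx : gproj Y ≠ x := by rw [hpY]; rintro rfl; exact hxr hy
      have hYb : Y ∉ gblock D N x := fun h => hpx (mem_gblock_proj h)
      rw [myIndexOf_append_right _ hYb, List.take_length_add_append, elimList_append,
        myIndexOf_cons_ne rest (fun h => hpx h.symm), List.take_succ_cons]
      show gproj '' closedNbhd _ Y ⊆
        closedNbhd (elimList (eliminate G x) (rest.take (rest.idxOf (gproj Y)))) (gproj Y)
      exact ih (elimList H (gblock D N x)) (eliminate G x) (List.nodup_cons.1 hnd).2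
        (block_inv hinv) Y hmem

/-- Injection of the generalized `N`-world variables into `V × Fin N`. -/
def gemb (D : Set V) {N : ℕ} (hN : 0 < N) : GNVar D N → V × Fin N
  | Sum.inl x => (x.1, ⟨0, hN⟩)
  | Sum.inr x => (x.1.1, x.2)

lemma gemb_injective (D : Set V) {N : ℕ} (hN : 0 < N) :
    Function.Injective (gemb D hN) := by
  rintro (x | x) (y | y) h
  · simp only [gemb, Prod.mk.injEq] at h
    exact congrArg Sum.inl (Subtype.ext h.1)
  · simp only [gemb, Prod.mk.injEq] at h
    exact (x.2 (by rw [h.1]; exact y.1.2)).elim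
  · simp only [gemb, Prod.mk.injEq] at h
    exact (y.2 (by rw [← h.1]; exact x.1.2)).elim
  · obtain ⟨⟨x1, hx1⟩, x2⟩ := x
    obtain ⟨⟨y1, hy1⟩, y2⟩ := y
    simp only [gemb, Prod.mk.injEq] at h
    obtain ⟨h1, h2⟩ := h
    subst h1
    subst h2
    rfl

lemma gemb_fst {D : Set V} {N : ℕ} (hN : 0 < N) (a : GNVar D N) :
    (gemb D hN a).1 = gproj a := by
  cases a <;> rfl

lemma ncard_prod_univ_fin {s : Set V} (N : ℕ) :
    (s ×ˢ (Set.univ : Set (Fin N))).ncard = s.ncard * N := by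
  have h1 : (s ×ˢ (Set.univ : Set (Fin N))).ncard = s.ncard * Nat.card (Fin N) := by
    rw [← Nat.card_coe_set_eq, Nat.card_congr (Equiv.Set.prod s Set.univ), Nat.card_prod,
      Nat.card_coe_set_eq, Nat.card_congr (Equiv.Set.univ (Fin N))]
  rw [h1, Nat.card_eq_fintype_card, Fintype.card_fin]

end GNAux


/-- the treewidth of any generalized `N`-world network of a base network of
treewidth `w` is at most `N(w + 1) − 1`, for any subset `D` of duplicated nodes and any
choice `ex` of added edges between duplicates. -/
theorem gnworld_treewidth_le {V : Type*} [Fintype V]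
    (E : V → V → Prop) (hE : IsAcyclicRel E)
    (D : Set V) (N : ℕ) (hN : 1 ≤ N) (ex : V → Fin N → Fin N → Prop) :
    treewidthOf (gnEdge E D N ex) ≤ N * (treewidthOf E + 1) - 1 := by
  classical
  -- choose an optimal elimination order for the base network
  have hne : {w : ℕ | ∃ π : List V, IsElimOrder π ∧ orderWidth E π = w}.Nonempty :=
    ⟨orderWidth E Finset.univ.toList, Finset.univ.toList,
      ⟨Finset.nodup_toList _, fun x => Finset.mem_toList.2 (Finset.mem_univ x)⟩, rfl⟩
  obtain ⟨π, hπ, hwπ⟩ := Nat.sInf_mem hne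
  set w := treewidthOf E with hw
  set S := {n : ℕ | ∃ X ∈ π, n = (clusterOf E π X).ncard} with hS_def
  have hbdd : BddAbove S := by
    refine ⟨Fintype.card V, ?_⟩
    rintro n ⟨X, -, rfl⟩
    calc (clusterOf E π X).ncard ≤ (Set.univ : Set V).ncard :=
        Set.ncard_le_ncard (Set.subset_univ _) Set.finite_univ
      _ = Fintype.card V := by rw [Set.ncard_univ, Nat.card_eq_fintype_card]
  -- every base cluster has at most w + 1 variables
  have hclus : ∀ X : V, (clusterOf E π X).ncard ≤ w + 1 := by
    intro X
    have hmem : (clusterOf E π X).ncard ∈ S := ⟨X, hπ.2 X, rfl⟩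
    have hle : (clusterOf E π X).ncard ≤ sSup S := le_csSup hbdd hmem
    have h1 : 0 < (clusterOf E π X).ncard :=
      (Set.ncard_pos (Set.toFinite _)).2 ⟨X, Set.mem_insert _ _⟩
    have hwS : sSup S - 1 = w := hwπ
    omega
  set gE := gnEdge E D N ex with hgE
  set πN := gnOrder D N π with hπN_def
  have hπN : IsElimOrder πN := ⟨gnOrder_nodup hπ.1, fun Y => mem_gnOrder hπ.2 Y⟩
  have hN0 : 0 < N := hN
  -- every cluster of the generalized N-world elimination has at most N (w+1) variables
  have hNb : ∀ Y ∈ πN, (clusterOf gE πN Y).ncard ≤ N * (w + 1) := by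
    intro Y hY
    have hsub : gproj '' clusterOf gE πN Y ⊆ clusterOf E π (gproj Y) :=
      main_cluster π (moralGraph gE) (moralGraph E) hπ.1 base_InvP Y hY
    have himg : gemb D hN0 '' clusterOf gE πN Y ⊆
        (clusterOf E π (gproj Y)) ×ˢ (Set.univ : Set (Fin N)) := by
      rintro _ ⟨a, ha, rfl⟩
      refine Set.mem_prod.2 ⟨?_, Set.mem_univ _⟩
      rw [gemb_fst]
      exact hsub ⟨a, ha, rfl⟩
    calc (clusterOf gE πN Y).ncard
        = (gemb D hN0 '' clusterOf gE πN Y).ncard :=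
          (Set.ncard_image_of_injective _ (gemb_injective D hN0)).symm
      _ ≤ ((clusterOf E π (gproj Y)) ×ˢ (Set.univ : Set (Fin N))).ncard :=
          Set.ncard_le_ncard himg (Set.Finite.prod (Set.toFinite _) Set.finite_univ)
      _ = (clusterOf E π (gproj Y)).ncard * N := ncard_prod_univ_fin N
      _ ≤ (w + 1) * N := Nat.mul_le_mul_right N (hclus _)
      _ = N * (w + 1) := Nat.mul_comm _ _
  have hwidth : orderWidth gE πN ≤ N * (w + 1) - 1 := by
    unfold orderWidth
    refine Nat.sub_le_sub_right ?_ 1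
    by_cases hS : {n : ℕ | ∃ Y ∈ πN, n = (clusterOf gE πN Y).ncard}.Nonempty
    · refine csSup_le hS ?_
      rintro n ⟨Y, hY, rfl⟩
      exact hNb Y hY
    · rw [Set.not_nonempty_iff_eq_empty.1 hS, csSup_empty]
      exact bot_le
  calc treewidthOf gE ≤ orderWidth gE πN := Nat.sInf_le ⟨πN, hπN, rfl⟩
    _ ≤ N * (w + 1) - 1 := hwidth


end Counterfactual
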